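/- Fix β>0 and θ,α∈ℝ. For every t>0 and every real λ>−c̃^θ_t, ∫_0^∞ e^{−λz} m^{α,θ}(t,z) q^θ_t(z) dz = (c̃^θ_t/(c̃^θ_t+λ))² · exp(−α u^θ(λ,t)/(c^θ_t)²) = (c̃^θ_t/(c̃^θ_t+λ))² · exp(−αλ/(c^θ_t(c̃^θ_t+λ))). (This identifies the Laplace transform of the one-dimensional marginal of the CSBP under the m^{α,θ}-h-transform, i.e. of the immigrated CSBP Z^α of Proposition prop:Zaq.) -/

import Mathlib

/-!
With `E = e^{2βθt}` one has `c̃^θ_t = c^θ_t E`, and `m^{α,θ}(t, ·)` is, up to the factor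
`E e^{-α/c^θ_t}`, the series `∑ aⁱ z^{i+1}/(i!(i+1)!)` with `a = αE`. Its Laplace transform can be
taken termwise: `∫₀^∞ z^{i+1} e^{-sz} dz = (i+1)!/s^{i+2}` turns the series into
`s⁻² ∑ (a/s)ⁱ/i! = s⁻² e^{a/s}`. With `s = c̃^θ_t + λ` the prefactors combine into
`(c̃^θ_t/s)²` and the exponents into `-αλ/(c^θ_t s)`.
-/

open MeasureTheory Filter

/-- `c^θ_t` from the paper, with time-scale parameter `β`. -/
noncomputable def cc (β θ t : ℝ) : ℝ :=
  if θ = 0 then 1 / (β * t) else 2 * θ / (Real.exp (2 * β * θ * t) - 1)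

/-- `c̃^θ_t` from the paper. -/
noncomputable def cct (β θ t : ℝ) : ℝ :=
  if θ = 0 then 1 / (β * t) else 2 * θ / (1 - Real.exp (-(2 * β * θ * t)))

/-- `u^θ(λ, t)` from the paper. -/
noncomputable def uu (β θ l t : ℝ) : ℝ :=
  if t = 0 then l else l * cc β θ t / (cct β θ t + l)

/-- entrance density `q^θ_t(x)`. -/
noncomputable def qe (β θ t x : ℝ) : ℝ :=
  cc β θ t * cct β θ t * Real.exp (-(cct β θ t * x))

/-- transition density `q^θ_t(x, y)`. -/
noncomputable def qt (β θ t x y : ℝ) : ℝ :=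
  x * cc β θ t * cct β θ t * Real.exp (-((x + y) * cc β θ t) - 2 * θ * y) *
    ∑' k : ℕ, (x * y * cc β θ t * cct β θ t) ^ k /
      ((Nat.factorial k : ℝ) * (Nat.factorial (k + 1) : ℝ))

/-- the space-time harmonic function `m^{α,θ}(t, z)`. -/
noncomputable def mm (β θ α t z : ℝ) : ℝ :=
  z * Real.exp (-(α / cc β θ t)) *
    ∑' i : ℕ, (α * z) ^ i * Real.exp (((i : ℝ) + 1) * (2 * β * θ * t)) /
      ((Nat.factorial i : ℝ) * (Nat.factorial (i + 1) : ℝ))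

/-- the space-time harmonic function `m̃^{α,θ}(t, z)`. -/
noncomputable def mmt (β θ α t z : ℝ) : ℝ :=
  z * Real.exp (2 * θ * z) * Real.exp (-(α / cct β θ t)) *
    ∑' i : ℕ, (α * z) ^ i * Real.exp (-(((i : ℝ) + 1) * (2 * β * θ * t))) /
      ((Nat.factorial i : ℝ) * (Nat.factorial (i + 1) : ℝ))

open Real Set
open scoped Nat

lemma integrableOn_pow_mul_exp_neg_mul_Ioi (n : ℕ) {s : ℝ} (hs : 0 < s) :
    IntegrableOn (fun z : ℝ => z ^ n * exp (-(s * z))) (Ioi 0) := by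
  have h := integrableOn_rpow_mul_exp_neg_mul_rpow (s := n)
    (neg_one_lt_zero.trans_le n.cast_nonneg) one_pos hs
  refine h.congr_fun (fun z _ => ?_) measurableSet_Ioi
  simp only [rpow_natCast, rpow_one, neg_mul]

lemma integral_pow_mul_exp_neg_mul_Ioi (n : ℕ) {s : ℝ} (hs : 0 < s) :
    ∫ z in Ioi (0 : ℝ), z ^ n * exp (-(s * z)) = n ! / s ^ (n + 1) := by
  have h := integral_rpow_mul_exp_neg_mul_Ioi (a := n + 1) (by positivity) hs
  simp only [add_sub_cancel_right, rpow_natCast] at h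
  rw [h, Gamma_nat_eq_factorial, ← Nat.cast_succ, rpow_natCast, one_div, inv_pow, inv_mul_eq_div]

lemma hasSum_integral_tsum_pow_mul_exp_neg_mul {b : ℕ → ℝ} {n : ℕ → ℕ} {s : ℝ} (hs : 0 < s)
    (hb : Summable fun i => |b i| * (n i)! / s ^ (n i + 1)) :
    HasSum (fun i => b i * (n i)! / s ^ (n i + 1))
      (∫ z in Ioi (0 : ℝ), (∑' i, b i * z ^ n i) * exp (-(s * z))) := by
  have hF_int : ∀ i, IntegrableOn (fun z => b i * (z ^ n i * exp (-(s * z)))) (Ioi 0) :=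
    fun i => (integrableOn_pow_mul_exp_neg_mul_Ioi (n i) hs).const_mul (b i)
  have hmoment : ∀ (a : ℝ) (k : ℕ),
      ∫ z in Ioi (0 : ℝ), a * (z ^ k * exp (-(s * z))) = a * k ! / s ^ (k + 1) := fun a k => by
    rw [integral_const_mul, integral_pow_mul_exp_neg_mul_Ioi k hs, mul_div_assoc]
  have hF_norm : ∀ i, ∫ z in Ioi (0 : ℝ), ‖b i * (z ^ n i * exp (-(s * z)))‖
      = |b i| * (n i)! / s ^ (n i + 1) := fun i => by
    rw [← hmoment]
    refine setIntegral_congr_fun measurableSet_Ioi fun z hz => ?_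
    simp [abs_of_pos (mem_Ioi.mp hz)]
  have h := hasSum_integral_of_summable_integral_norm hF_int (by simpa only [hF_norm] using hb)
  simp only [hmoment] at h
  simpa only [← mul_assoc, tsum_mul_right] using h

/-- For `a > 0` this is `√(z/a) · I₁(2√(az))`. -/
noncomputable def besselSeries (a z : ℝ) : ℝ :=
  ∑' i : ℕ, a ^ i / (i ! * (i + 1)!) * z ^ (i + 1)

lemma integral_besselSeries_mul_exp_neg_mul (a : ℝ) {s : ℝ} (hs : 0 < s) :
    ∫ z in Ioi (0 : ℝ), besselSeries a z * exp (-(s * z)) = exp (a / s) / s ^ 2 := by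
  have hterm : ∀ (x : ℝ) (i : ℕ),
      x ^ i / (i ! * (i + 1)!) * (i + 1)! / s ^ (i + 1 + 1) = (x / s) ^ i / i ! / s ^ 2 := by
    intro x i
    rw [div_pow]
    field_simp
    ring
  have hsum := hasSum_integral_tsum_pow_mul_exp_neg_mul (b := fun i => a ^ i / (i ! * (i + 1)!))
    (n := fun i => i + 1) hs ?_
  · simp only [hterm] at hsum
    simp only [besselSeries]
    rw [hsum.unique ((NormedSpace.expSeries_div_hasSum_exp (a / s)).div_const _),
      exp_eq_exp_ℝ]
  · simp only [abs_div, abs_pow, abs_mul, Nat.abs_cast, hterm]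
    exact (Real.summable_pow_div_factorial _).div_const _

lemma mm_eq_besselSeries (β θ α t z : ℝ) :
    mm β θ α t z = exp (2 * β * θ * t) * exp (-(α / cc β θ t)) *
      besselSeries (α * exp (2 * β * θ * t)) z := by
  rw [mm, besselSeries, ← tsum_mul_left, ← tsum_mul_left]
  refine tsum_congr fun i => ?_
  rw [← Nat.cast_succ, exp_nat_mul, pow_succ]
  ring

lemma cc_pos {β θ t : ℝ} (hβ : 0 < β) (ht : 0 < t) : 0 < cc β θ t := by
  unfold cc
  split_ifs with hθ
  · positivity
  rcases lt_or_gt_of_ne hθ with hθ | hθ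
  · refine div_pos_of_neg_of_neg (by linarith) (sub_neg.mpr (exp_lt_one_iff.mpr ?_))
    nlinarith [mul_pos hβ ht]
  · exact div_pos (by linarith) (sub_pos.mpr (one_lt_exp_iff.mpr (by positivity)))

lemma cct_eq_cc_mul_exp {β θ t : ℝ} (hβ : β ≠ 0) (ht : t ≠ 0) :
    cct β θ t = cc β θ t * exp (2 * β * θ * t) := by
  unfold cc cct
  split_ifs with hθ
  · simp [hθ]
  have hx : 2 * β * θ * t ≠ 0 := by positivity
  have h1 : exp (2 * β * θ * t) - 1 ≠ 0 := sub_ne_zero.mpr (by simpa using hx)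
  rw [exp_neg]
  field_simp

lemma uu_div_cc_sq {β θ t : ℝ} (l : ℝ) (ht : t ≠ 0) (hc : cc β θ t ≠ 0) :
    uu β θ l t / cc β θ t ^ 2 = l / (cc β θ t * (cct β θ t + l)) := by
  rw [uu, if_neg ht]
  field_simp

/-- Laplace transform of the one-dimensional marginal of the CSBP under the
`m^{α,θ}`-h-transform: for `t > 0` and `λ > -c̃^θ_t`,
`∫_0^∞ e^{-λz} m^{α,θ}(t,z) q^θ_t(z) dz = (c̃^θ_t/(c̃^θ_t+λ))² exp(-α u^θ(λ,t)/(c^θ_t)²)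
  = (c̃^θ_t/(c̃^θ_t+λ))² exp(-αλ/(c^θ_t (c̃^θ_t+λ)))`. -/
theorem mm_transform_laplace (β θ α : ℝ) (hβ : 0 < β) (t : ℝ) (ht : 0 < t)
    (l : ℝ) (hl : -cct β θ t < l) :
    (∫ z in Set.Ioi (0 : ℝ), Real.exp (-(l * z)) * mm β θ α t z * qe β θ t z)
      = (cct β θ t / (cct β θ t + l)) ^ 2 *
          Real.exp (-(α * uu β θ l t / (cc β θ t) ^ 2)) ∧
    (cct β θ t / (cct β θ t + l)) ^ 2 * Real.exp (-(α * uu β θ l t / (cc β θ t) ^ 2))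
      = (cct β θ t / (cct β θ t + l)) ^ 2 *
          Real.exp (-(α * l / (cc β θ t * (cct β θ t + l)))) := by
  set c := cc β θ t
  set d := cct β θ t
  set E := exp (2 * β * θ * t)
  have hc : 0 < c := cc_pos hβ ht
  have hd : d = c * E := cct_eq_cc_mul_exp hβ.ne' ht.ne'
  have hs : 0 < d + l := by linarith [show 0 < d by rw [hd]; positivity]
  have hu : α * uu β θ l t / c ^ 2 = α * l / (c * (d + l)) := by
    rw [mul_div_assoc, mul_div_assoc, uu_div_cc_sq l ht.ne' hc.ne']
  refine ⟨?_, by rw [hu]⟩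
  calc ∫ z in Ioi (0 : ℝ), exp (-(l * z)) * mm β θ α t z * qe β θ t z
      = c * d * E * exp (-(α / c)) *
          ∫ z in Ioi (0 : ℝ), besselSeries (α * E) z * exp (-((d + l) * z)) := by
        rw [← integral_const_mul]
        refine setIntegral_congr_fun measurableSet_Ioi fun z _ => ?_
        rw [mm_eq_besselSeries, qe, add_mul, neg_add, exp_add]
        ring
    _ = c * d * E * exp (-(α / c)) * (exp (α * E / (d + l)) / (d + l) ^ 2) := by
        rw [integral_besselSeries_mul_exp_neg_mul _ hs]
    _ = (d / (d + l)) ^ 2 * exp (-(α * uu β θ l t / c ^ 2)) := by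
        have hexp : -(α / c) + α * E / (d + l) = -(α * l / (c * (d + l))) := by
          rw [hd] at hs ⊢
          field_simp
          ring
        rw [hu, ← hexp, exp_add, hd]
        field_simp
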